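/- arXiv:0905.0615 — 2 statements merged into one kernel-verified Lean document; each statement's English description precedes it below -/
import Mathlib

section
/- For every integer n ≥ 1, the function c_n : X × X → ℝ defined by c_n(x,y) = inf over all chains x = x₀, x₁, …, xₙ = y in X of ∑_{i<n} c(xᵢ,xᵢ₊₁) is everywhere finite and continuous. -/
open Metric Set Filter Topology

/-- `X` is a `B`-length space at scale `K`. -/
def IsBLengthSpaceAtScale (X : Type*) [MetricSpace X] (B K : ℝ) : Prop :=
  ∀ x y : X, ∃ (n : ℕ) (p : ℕ → X), p 0 = x ∧ p n = y ∧
    (∀ i < n, dist (p i) (p (i + 1)) ≤ K) ∧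
    ∑ i ∈ Finset.range n, dist (p i) (p (i + 1)) ≤ B * dist x y

/-- Uniform superlinearity of the cost `c`. -/
def UniformlySuperlinear {X : Type*} [MetricSpace X] (c : X → X → ℝ) : Prop :=
  ∀ k : ℝ, 0 ≤ k → ∃ C : ℝ, ∀ x y : X, k * dist x y - C ≤ c x y

/-- Uniform boundedness of the cost `c`. -/
def UniformlyBounded {X : Type*} [MetricSpace X] (c : X → X → ℝ) : Prop :=
  ∀ R : ℝ, ∃ A : ℝ, ∀ x y : X, dist x y ≤ R → c x y ≤ A

/-- `u` is `α`-dominated: `u y - u x ≤ c x y + α` for all `x y`. -/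
def Dominated {X : Type*} (c : X → X → ℝ) (α : ℝ) (u : X → ℝ) : Prop :=
  ∀ x y : X, u y - u x ≤ c x y + α

/-- Negative Lax-Oleinik semigroup. -/
noncomputable def Tm {X : Type*} (c : X → X → ℝ) (u : X → ℝ) (x : X) : ℝ :=
  ⨅ y, (u y + c y x)

/-- Positive Lax-Oleinik semigroup. -/
noncomputable def Tp {X : Type*} (c : X → X → ℝ) (u : X → ℝ) (x : X) : ℝ :=
  ⨆ y, (u y - c x y)

/-- The critical constant `α[0]`: the smallest `α` for which `α`-dominated functions exist. -/
noncomputable def critValue {X : Type*} (c : X → X → ℝ) : ℝ :=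
  sInf {α : ℝ | ∃ u : X → ℝ, Dominated c α u}

/-- The Mañé potential `φ(x,y) = sup_u (u y - u x)`, sup over critical sub-solutions. -/
noncomputable def mane {X : Type*} (c : X → X → ℝ) (x y : X) : ℝ :=
  sSup {r : ℝ | ∃ u : X → ℝ, Dominated c (critValue c) u ∧ r = u y - u x}

/-- A bi-infinite sequence is `(u,c,α)`-calibrated if all its finite subchains of
consecutive terms are calibrated. -/
def IsCalibrated {X : Type*} (c : X → X → ℝ) (α : ℝ) (u : X → ℝ) (x : ℤ → X) : Prop :=
  ∀ (m : ℤ) (k : ℕ), u (x (m + k)) =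
    u (x m) + (∑ i ∈ Finset.range k, c (x (m + i)) (x (m + i + 1))) + k * α

/-- The projected Aubry set of a critical sub-solution `u`. -/
def projAubry {X : Type*} (c : X → X → ℝ) (u : X → ℝ) : Set X :=
  {p : X | ∃ x : ℤ → X, IsCalibrated c (critValue c) u x ∧ x 0 = p}

/-- The set `Â_u` of pairs of consecutive terms of calibrated bi-infinite sequences. -/
def aubryPairs {X : Type*} (c : X → X → ℝ) (u : X → ℝ) : Set (X × X) :=
  {q : X × X | ∃ (x : ℤ → X) (n : ℤ),
    IsCalibrated c (critValue c) u x ∧ x n = q.1 ∧ x (n + 1) = q.2}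

/-- The projected Aubry set `A = ∩_u A_u`, intersection over all critical sub-solutions. -/
def projAubrySet {X : Type*} (c : X → X → ℝ) : Set X :=
  {p : X | ∀ u : X → ℝ, Dominated c (critValue c) u → p ∈ projAubry c u}

/-- The Aubry pair set `Â = ∩_u Â_u`, intersection over all critical sub-solutions. -/
def aubryPairsSet {X : Type*} (c : X → X → ℝ) : Set (X × X) :=
  {q : X × X | ∀ u : X → ℝ, Dominated c (critValue c) u → q ∈ aubryPairs c u}

/-- `c_n(x,y)`: infimum of total cost over chains of length `n` from `x` to `y`. -/
noncomputable def cChain {X : Type*} (c : X → X → ℝ) (n : ℕ) (x y : X) : ℝ :=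
  sInf {r : ℝ | ∃ p : ℕ → X, p 0 = x ∧ p n = y ∧
    r = ∑ i ∈ Finset.range n, c (p i) (p (i + 1))}

/-- `φ_n(x,y) = inf_{k ≥ n} (c_k(x,y) + k·α)`. -/
noncomputable def phiN {X : Type*} (c : X → X → ℝ) (α : ℝ) (n : ℕ) (x y : X) : ℝ :=
  sInf {r : ℝ | ∃ k : ℕ, n ≤ k ∧ r = cChain c k x y + k * α}

/-- The Peierls barrier, with values in the extended reals. -/
noncomputable def peierls {X : Type*} (c : X → X → ℝ) (α : ℝ) (x y : X) : EReal :=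
  Filter.liminf (fun n : ℕ => ((cChain c n x y + n * α : ℝ) : EReal)) Filter.atTop

/-- Negative Lax-Oleinik semigroup on extended-real-valued functions. -/
noncomputable def eTm {X : Type*} (c : X → X → ℝ) (u : X → EReal) (x : X) : EReal :=
  ⨅ y, (u y + (c y x : EReal))

/-- Positive Lax-Oleinik semigroup on extended-real-valued functions. -/
noncomputable def eTp {X : Type*} (c : X → X → ℝ) (u : X → EReal) (x : X) : EReal :=
  ⨆ y, (u y - (c x y : EReal))

/-
The superlinear bound `c a b ≥ dist a b - C` makes the cost of a chain control its length, and
bounds `c_n` below. Near `(x₀, y₀)` the values `c_n(x, y)` are bounded above (uniform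
boundedness of `c` applied to the chain `x, …, x, y`), so all nearly optimal chains stay in a fixed
closed ball around `x₀`, which is compact. Locally `c_n` is therefore the infimum over a compact
set of chains of a jointly continuous function of the endpoints and the chain, hence continuous.
-/

section Chains

variable {X : Type*}

def chainCost (c : X → X → ℝ) (n : ℕ) (p : ℕ → X) : ℝ :=
  ∑ i ∈ Finset.range n, c (p i) (p (i + 1))

def chainCosts (c : X → X → ℝ) (n : ℕ) (x y : X) : Set ℝ :=
  {r | ∃ p : ℕ → X, p 0 = x ∧ p n = y ∧ r = chainCost c n p}

theorem chainCost_truncate (c : X → X → ℝ) (n : ℕ) (p : ℕ → X) :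
    chainCost c n (fun i => p (min i n)) = chainCost c n p :=
  Finset.sum_congr rfl fun i hi => by
    rw [Finset.mem_range] at hi
    simp only [min_eq_left hi.le, min_eq_left (Nat.succ_le_of_lt hi)]

def withEnds (n : ℕ) (x y : X) (p : ℕ → X) : ℕ → X :=
  fun i => if i = 0 then x else if i = n then y else p i

theorem withEnds_zero (n : ℕ) (x y : X) (p : ℕ → X) : withEnds n x y p 0 = x := by
  simp [withEnds]

theorem withEnds_self {n : ℕ} (hn : n ≠ 0) (x y : X) (p : ℕ → X) : withEnds n x y p n = y := by
  simp [withEnds, hn]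

theorem withEnds_eq_self {n : ℕ} {x y : X} {p : ℕ → X} (h0 : p 0 = x) (hn : p n = y) :
    withEnds n x y p = p := by
  funext i
  unfold withEnds
  split_ifs with hi0 hin
  · rw [hi0, h0]
  · rw [hin, hn]
  · rfl

theorem chainCosts_nonempty {n : ℕ} (hn : n ≠ 0) (c : X → X → ℝ) (x y : X) :
    (chainCosts c n x y).Nonempty :=
  ⟨_, withEnds n x y (fun _ => x), withEnds_zero n x y _, withEnds_self hn x y _, rfl⟩

theorem cChain_le_chainCost {c : X → X → ℝ} {n : ℕ} {x y : X}
    (hbdd : BddBelow (chainCosts c n x y)) {p : ℕ → X} (h0 : p 0 = x) (hn : p n = y) :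
    cChain c n x y ≤ chainCost c n p :=
  csInf_le hbdd ⟨p, h0, hn, rfl⟩

theorem cChain_eq_sInf_image {c : X → X → ℝ} {n : ℕ} (hn : n ≠ 0) {x y : X}
    (hbdd : BddBelow (chainCosts c n x y)) {K : Set (ℕ → X)}
    (hK : ∀ p : ℕ → X, p 0 = x → p n = y → chainCost c n p < cChain c n x y + 1 →
      ∃ q ∈ K, chainCost c n (withEnds n x y q) ≤ chainCost c n p) :
    cChain c n x y = sInf ((fun q => chainCost c n (withEnds n x y q)) '' K) := by
  set T := (fun q => chainCost c n (withEnds n x y q)) '' K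
  have hTS : T ⊆ chainCosts c n x y := by
    rintro _ ⟨q, -, rfl⟩
    exact ⟨_, withEnds_zero n x y q, withEnds_self hn x y q, rfl⟩
  have hS := chainCosts_nonempty hn c x y
  have near_optimal (b : ℝ) (hb : cChain c n x y < b) :
      ∃ q ∈ K, chainCost c n (withEnds n x y q) < min b (cChain c n x y + 1) := by
    obtain ⟨_, ⟨p, h0, hpn, rfl⟩, hp⟩ :=
      exists_lt_of_csInf_lt hS (lt_min hb (lt_add_one (cChain c n x y)))
    obtain ⟨q, hq, hle⟩ := hK p h0 hpn (hp.trans_le (min_le_right _ _))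
    exact ⟨q, hq, hle.trans_lt hp⟩
  obtain ⟨q, hq, -⟩ := near_optimal _ (lt_add_one _)
  refine le_antisymm (csInf_le_csInf hbdd ⟨_, q, hq, rfl⟩ hTS) (not_lt.mp fun h => ?_)
  obtain ⟨q, hq, hlt⟩ := near_optimal _ h
  exact (csInf_le (hbdd.mono hTS) ⟨q, hq, rfl⟩).not_gt (hlt.trans_le (min_le_left _ _))

theorem continuous_chainCost_withEnds [TopologicalSpace X] {c : X → X → ℝ}
    (hc : Continuous fun q : X × X => c q.1 q.2) (n : ℕ) :
    Continuous fun z : (X × X) × (ℕ → X) => chainCost c n (withEnds n z.1.1 z.1.2 z.2) := by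
  have hends (i : ℕ) : Continuous fun z : (X × X) × (ℕ → X) => withEnds n z.1.1 z.1.2 z.2 i := by
    unfold withEnds
    split_ifs <;> fun_prop
  exact continuous_finsetSum _ fun i _ => hc.comp ((hends i).prodMk (hends (i + 1)))

end Chains

section Metric

variable {X : Type*} [PseudoMetricSpace X] {c : X → X → ℝ} {C : ℝ}

theorem dist_le_chainCost (hC : ∀ a b, dist a b - C ≤ c a b) {n i : ℕ} (hi : i ≤ n)
    (p : ℕ → X) : dist (p 0) (p i) ≤ chainCost c n p + n * C :=
  calc dist (p 0) (p i) ≤ ∑ j ∈ Finset.range i, dist (p j) (p (j + 1)) :=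
        dist_le_range_sum_dist p i
    _ ≤ ∑ j ∈ Finset.range n, dist (p j) (p (j + 1)) :=
        Finset.sum_le_sum_of_subset_of_nonneg (Finset.range_subset_range.mpr hi)
          fun _ _ _ => dist_nonneg
    _ ≤ ∑ j ∈ Finset.range n, (c (p j) (p (j + 1)) + C) :=
        Finset.sum_le_sum fun j _ => by linarith [hC (p j) (p (j + 1))]
    _ = chainCost c n p + n * C := by
        rw [Finset.sum_add_distrib, Finset.sum_const, Finset.card_range, nsmul_eq_mul, chainCost]

theorem bddBelow_chainCosts (hC : ∀ a b, dist a b - C ≤ c a b) (n : ℕ) (x y : X) :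
    BddBelow (chainCosts c n x y) := by
  refine ⟨-(n * C), ?_⟩
  rintro _ ⟨p, -, -, rfl⟩
  linarith [dist_le_chainCost hC (Nat.zero_le n) p, dist_self (p 0)]

theorem cChain_le_of_dist_le {n : ℕ} (hn : n ≠ 0) (hC : ∀ a b, dist a b - C ≤ c a b)
    {R A : ℝ} (hA : ∀ a b, dist a b ≤ R → c a b ≤ A) {x y : X} (hxy : dist x y ≤ R) :
    cChain c n x y ≤ n * A := by
  set p := withEnds n x y (fun _ => x)
  have hstep (i : ℕ) (hi : i ∈ Finset.range n) : c (p i) (p (i + 1)) ≤ A := by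
    rw [Finset.mem_range] at hi
    apply hA
    simp only [p, withEnds]
    split_ifs <;> first | omega | simpa using hxy.trans' dist_nonneg
  calc cChain c n x y ≤ chainCost c n p :=
        cChain_le_chainCost (bddBelow_chainCosts hC n x y) (withEnds_zero n x y _)
          (withEnds_self hn x y _)
    _ ≤ n * A := by
        simpa [chainCost] using Finset.sum_le_card_nsmul (Finset.range n) _ A hstep

end Metric

theorem continuous_cChain {X : Type*} [MetricSpace X] [ProperSpace X] {c : X → X → ℝ} {C : ℝ}
    {n : ℕ} (hn : n ≠ 0) (hc : Continuous fun q : X × X => c q.1 q.2)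
    (hC : ∀ a b, dist a b - C ≤ c a b) (hub : UniformlyBounded c) : Continuous fun q : X × X => cChain c n q.1 q.2 := by
  refine continuous_iff_continuousAt.mpr fun ⟨x₀, y₀⟩ => ?_
  obtain ⟨A, hA⟩ := hub (dist x₀ y₀ + 2)
  -- a chain of cost `< c_n(x, y) + 1 ≤ n A + 1` starting within `1` of `x₀` stays in this ball
  set K : Set (ℕ → X) := univ.pi fun _ => closedBall x₀ (n * A + n * C + 2)
  have hK : IsCompact K := isCompact_univ_pi fun _ => isCompact_closedBall _ _
  have hinf := hK.continuous_sInf (f := fun (z : X × X) q => chainCost c n (withEnds n z.1 z.2 q))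
    (continuous_chainCost_withEnds hc n)
  refine hinf.continuousAt.congr ?_
  filter_upwards [ball_mem_nhds (x₀, y₀) one_pos] with ⟨x, y⟩ hxy
  obtain ⟨hx, hy⟩ : dist x x₀ < 1 ∧ dist y y₀ < 1 := by
    simpa [Prod.dist_eq] using hxy
  have hupper : cChain c n x y ≤ n * A :=
    cChain_le_of_dist_le hn hC hA (by linarith [dist_triangle4 x x₀ y₀ y, dist_comm y y₀])
  refine (cChain_eq_sInf_image hn (bddBelow_chainCosts hC n x y) fun p h0 hpn hp => ?_).symm
  refine ⟨fun i => p (min i n), fun i _ => ?_, ?_⟩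
  · rw [mem_closedBall]
    linarith [dist_le_chainCost hC (min_le_right i n) p, dist_triangle_left (p (min i n)) x₀ (p 0),
      h0 ▸ hx]
  · rw [withEnds_eq_self (by simpa using h0) (by simpa using hpn), chainCost_truncate]

theorem cChain_finite_and_continuous_general {X : Type*} [MetricSpace X] [ProperSpace X]
    {c : X → X → ℝ} (hcont : Continuous fun q : X × X => c q.1 q.2)
    (hsl : UniformlySuperlinear c) (hub : UniformlyBounded c) (n : ℕ) (hn : 1 ≤ n) :
    (∀ x y : X,
      {r : ℝ | ∃ p : ℕ → X, p 0 = x ∧ p n = y ∧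
        r = ∑ i ∈ Finset.range n, c (p i) (p (i + 1))}.Nonempty ∧
      BddBelow {r : ℝ | ∃ p : ℕ → X, p 0 = x ∧ p n = y ∧
        r = ∑ i ∈ Finset.range n, c (p i) (p (i + 1))}) ∧
    Continuous fun q : X × X => cChain c n q.1 q.2 := by
  have hn0 : n ≠ 0 := Nat.one_le_iff_ne_zero.mp hn
  obtain ⟨C, hC⟩ := hsl 1 zero_le_one
  have hC' : ∀ a b, dist a b - C ≤ c a b := fun a b => by simpa using hC a b
  exact ⟨fun x y => ⟨chainCosts_nonempty hn0 c x y, bddBelow_chainCosts hC' n x y⟩,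
    continuous_cChain hn0 hcont hC' hub⟩

theorem cChain_finite_and_continuous {X : Type*} [MetricSpace X] [Nonempty X] [ProperSpace X]
    {B K : ℝ} (hB : 1 ≤ B) (hK : 0 < K) (hlen : IsBLengthSpaceAtScale X B K)
    {c : X → X → ℝ} (hcont : Continuous fun q : X × X => c q.1 q.2)
    (hsl : UniformlySuperlinear c) (hub : UniformlyBounded c) (n : ℕ) (hn : 1 ≤ n) :
    (∀ x y : X,
      {r : ℝ | ∃ p : ℕ → X, p 0 = x ∧ p n = y ∧
        r = ∑ i ∈ Finset.range n, c (p i) (p (i + 1))}.Nonempty ∧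
      BddBelow {r : ℝ | ∃ p : ℕ → X, p 0 = x ∧ p n = y ∧
        r = ∑ i ∈ Finset.range n, c (p i) (p (i + 1))}) ∧
    Continuous fun q : X × X => cChain c n q.1 q.2 :=
  cChain_finite_and_continuous_general hcont hsl hub n hn
end

section
/- For every critical sub-solution u, all n,m ∈ ℕ and all x,y ∈ X, the Peierls barrier satisfies h(x,y) ≥ (T⁻)ⁿu(y) − (T⁺)ᵐu(x) + (n+m)·α[0]. -/
open Metric Set Filter Topology

section Aux

/-!
Splitting a chain `x = p₀, …, p_k = y` with `k ≥ n + m` into its first `m` steps, a middle part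
of `k - n - m` steps and its last `n` steps, the first part is controlled by `(T⁺)ᵐ u`, the last by
`(T⁻)ⁿ u` (both are again critical sub-solutions), and the middle by domination of `u`. This
bounds `c_k(x, y) + k α[0]` from below for all large `k`, hence the `liminf`.
-/

open Finset

namespace Dominated

variable {X : Type*} {c : X → X → ℝ} {α : ℝ} {u : X → ℝ}

theorem tm_le (hu : Dominated c α u) (x z : X) : Tm c u x ≤ u z + c z x :=
  ciInf_le ⟨u x - α, by rintro _ ⟨w, rfl⟩; linarith [hu w x]⟩ z

theorem le_tp (hu : Dominated c α u) (x z : X) : u z - c x z ≤ Tp c u x :=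
  le_ciSup ⟨u x + α, by rintro _ ⟨w, rfl⟩; show u w - c x w ≤ u x + α; linarith [hu x w]⟩ z

theorem sub_le_sum (hu : Dominated c α u) (p : ℕ → X) (k : ℕ) :
    u (p k) - u (p 0) ≤ ∑ i ∈ range k, c (p i) (p (i + 1)) + k * α := by
  induction k with
  | zero => simp
  | succ k ih =>
    rw [sum_range_succ]
    push_cast
    linarith [hu (p k) (p (k + 1))]

variable [Nonempty X]

theorem sub_le_tm (hu : Dominated c α u) (x : X) : u x - α ≤ Tm c u x :=
  le_ciInf fun z => by linarith [hu z x]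

theorem tp_le_add (hu : Dominated c α u) (x : X) : Tp c u x ≤ u x + α :=
  ciSup_le fun z => by linarith [hu x z]

theorem tm (hu : Dominated c α u) : Dominated c α (Tm c u) := fun a b => by
  linarith [hu.tm_le b a, hu.sub_le_tm a]

theorem tp (hu : Dominated c α u) : Dominated c α (Tp c u) := fun a b => by
  linarith [hu.tp_le_add b, hu.le_tp a b]

theorem iterate_tm (hu : Dominated c α u) (n : ℕ) : Dominated c α ((Tm c)^[n] u) := by
  induction n with
  | zero => exact hu
  | succ n ih => rw [Function.iterate_succ_apply']; exact ih.tm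

theorem iterate_tp (hu : Dominated c α u) (m : ℕ) : Dominated c α ((Tp c)^[m] u) := by
  induction m with
  | zero => exact hu
  | succ m ih => rw [Function.iterate_succ_apply']; exact ih.tp

theorem iterate_tm_le (hu : Dominated c α u) (p : ℕ → X) (n : ℕ) :
    (Tm c)^[n] u (p n) ≤ u (p 0) + ∑ i ∈ range n, c (p i) (p (i + 1)) := by
  induction n with
  | zero => simp
  | succ n ih =>
    rw [Function.iterate_succ_apply', sum_range_succ]
    linarith [(hu.iterate_tm n).tm_le (p (n + 1)) (p n)]

theorem le_iterate_tp (hu : Dominated c α u) (m : ℕ) (p : ℕ → X) :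
    u (p m) - ∑ i ∈ range m, c (p i) (p (i + 1)) ≤ (Tp c)^[m] u (p 0) := by
  induction m generalizing p with
  | zero => simp
  | succ m ih =>
    rw [Function.iterate_succ_apply', sum_range_succ']
    linarith [(hu.iterate_tp m).le_tp (p 0) (p 1), ih (fun i => p (i + 1))]

theorem iterate_tm_sub_iterate_tp_le_sum (hu : Dominated c α u) (p : ℕ → X) (n j m : ℕ) :
    (Tm c)^[n] u (p (m + j + n)) - (Tp c)^[m] u (p 0) + (n + m) * α ≤
      ∑ i ∈ range (m + j + n), c (p i) (p (i + 1)) + (m + j + n : ℕ) * α := by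
  have hfirst := hu.le_iterate_tp m p
  have hmiddle := hu.sub_le_sum (fun i => p (m + i)) j
  have hlast := hu.iterate_tm_le (fun i => p (m + j + i)) n
  simp only [add_zero, ← add_assoc] at hmiddle hlast
  rw [sum_range_add, sum_range_add]
  push_cast
  linarith

end Dominated

theorem le_cChain {X : Type*} {c : X → X → ℝ} {k : ℕ} {x y : X} {r : ℝ} (hk : k ≠ 0)
    (h : ∀ p : ℕ → X, p 0 = x → p k = y → r ≤ ∑ i ∈ range k, c (p i) (p (i + 1))) :
    r ≤ cChain c k x y := by
  refine le_csInf ⟨_, fun i => if i = 0 then x else y, rfl, if_neg hk, rfl⟩ ?_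
  rintro _ ⟨p, hp0, hpk, rfl⟩
  exact h p hp0 hpk

theorem peierls_ge_iterates_general {X : Type*} [Nonempty X]
    {c : X → X → ℝ}
    {u : X → ℝ} (hu : Dominated c (critValue c) u) (n m : ℕ) (x y : X) :
    (((Tm c)^[n] u y - (Tp c)^[m] u x + (n + m) * critValue c : ℝ) : EReal) ≤
      peierls c (critValue c) x y := by
  refine le_liminf_of_le (by isBoundedDefault) ?_
  filter_upwards [eventually_ge_atTop (n + m + 1)] with k hk
  obtain ⟨j, rfl⟩ : ∃ j, k = m + j + n := ⟨k - n - m, by omega⟩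
  rw [EReal.coe_le_coe_iff, ← sub_le_iff_le_add]
  refine le_cChain (by omega) fun p hp0 hpk => ?_
  have hchain := hu.iterate_tm_sub_iterate_tp_le_sum p n j m
  rw [hp0, hpk] at hchain
  linarith

theorem peierls_ge_iterates {X : Type*} [MetricSpace X] [Nonempty X] [ProperSpace X]
    {B K : ℝ} (hB : 1 ≤ B) (hK : 0 < K) (hlen : IsBLengthSpaceAtScale X B K)
    {c : X → X → ℝ} (hcont : Continuous fun q : X × X => c q.1 q.2)
    (hsl : UniformlySuperlinear c) (hub : UniformlyBounded c)
    {u : X → ℝ} (hu : Dominated c (critValue c) u) (n m : ℕ) (x y : X) :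
    (((Tm c)^[n] u y - (Tp c)^[m] u x + (n + m) * critValue c : ℝ) : EReal) ≤
      peierls c (critValue c) x y :=
  peierls_ge_iterates_general hu n m x y
end Aux
end
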